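/- Let σ₀ > 0 and define Δ₀ : ℝ^{3×3} × ℝ × ℝ → [0, ∞] by Δ₀(q, η, β) = σ₀‖sym q‖ if ‖sym q‖ ≤ η and ‖skew q‖ ≤ β, and +∞ otherwise (the dissipation function with vanishing spin yield stress σ̂₀ = 0). Then for Σ ∈ ℝ^{3×3} and g₁, g₂ ∈ ℝ, the supremum of ⟨Σ, q⟩ + g₁η + g₂β − Δ₀(q, η, β) over all q ∈ ℝ^{3×3} with tr q = 0 and all η, β ∈ ℝ equals 0 if g₁ ≤ 0, g₂ ≤ 0, ‖dev sym Σ‖ + g₁ ≤ σ₀ and ‖skew Σ‖ + g₂ ≤ 0, and the supremand is unbounded above otherwise. -/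
import Mathlib


open Matrix

noncomputable section

abbrev M3 := Matrix (Fin 3) (Fin 3) ℝ

def msym (X : M3) : M3 := (1/2 : ℝ) • (X + Xᵀ)

def mskew (X : M3) : M3 := (1/2 : ℝ) • (X - Xᵀ)

def mdev (X : M3) : M3 := X - (X.trace / 3) • (1 : M3)

def minner (A B : M3) : ℝ := (A * Bᵀ).trace

def mnorm (A : M3) : ℝ := Real.sqrt (minner A A)


lemma minner_expand (A B : M3) :
    minner A B = ∑ p : Fin 3 × Fin 3, A p.1 p.2 * B p.1 p.2 := by
  simp [minner, Matrix.trace, Matrix.mul_apply, Matrix.diag, Fintype.sum_prod_type]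

lemma minner_self_nonneg (A : M3) : 0 ≤ minner A A := by
  rw [minner_expand]
  exact Finset.sum_nonneg fun p _ => mul_self_nonneg _

lemma mnorm_nonneg (A : M3) : 0 ≤ mnorm A := Real.sqrt_nonneg _

lemma mnorm_sq (A : M3) : mnorm A ^ 2 = minner A A :=
  Real.sq_sqrt (minner_self_nonneg A)

lemma minner_le (A B : M3) : minner A B ≤ mnorm A * mnorm B := by
  rw [minner_expand, mnorm, mnorm, minner_expand, minner_expand]
  have h := Real.sum_mul_le_sqrt_mul_sqrt Finset.univ
    (fun p : Fin 3 × Fin 3 => A p.1 p.2) (fun p : Fin 3 × Fin 3 => B p.1 p.2)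
  simpa [pow_two] using h

lemma minner_three (A B : M3) :
    minner A B = ∑ i : Fin 3, ∑ j : Fin 3, A i j * B i j := by
  simp [minner, Matrix.trace, Matrix.mul_apply, Matrix.diag]

lemma trace_msym (q : M3) : (msym q).trace = q.trace := by
  simp [msym, Matrix.trace, Matrix.diag, Fin.sum_univ_three]
  ring

lemma minner_decomp (S q : M3) :
    minner S q = minner (msym S) (msym q) + minner (mskew S) (mskew q) := by
  simp [minner_three, msym, mskew, Fin.sum_univ_three, Matrix.add_apply, Matrix.sub_apply,
    Matrix.smul_apply, Matrix.transpose_apply, smul_eq_mul]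
  ring

lemma minner_dev_left (X B : M3) :
    minner (mdev X) B = minner X B - X.trace / 3 * B.trace := by
  simp [minner_three, mdev, Matrix.trace, Matrix.diag, Fin.sum_univ_three, Matrix.sub_apply,
    Matrix.smul_apply, Matrix.one_apply, smul_eq_mul]
  ring

lemma minner_smul_right (A B : M3) (t : ℝ) : minner A (t • B) = t * minner A B := by
  simp [minner_three, Matrix.smul_apply, smul_eq_mul, Fin.sum_univ_three]
  ring

lemma mnorm_smul (t : ℝ) (ht : 0 ≤ t) (A : M3) : mnorm (t • A) = t * mnorm A := by
  have h : minner (t • A) (t • A) = t ^ 2 * minner A A := by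
    simp [minner_three, Matrix.smul_apply, smul_eq_mul, Fin.sum_univ_three]
    ring
  rw [mnorm, h, Real.sqrt_mul (sq_nonneg t), Real.sqrt_sq ht, mnorm]

lemma mnorm_zero : mnorm (0 : M3) = 0 := by
  simp [mnorm, minner]

lemma msym_zero : msym (0 : M3) = 0 := by simp [msym]
lemma mskew_zero : mskew (0 : M3) = 0 := by simp [mskew]
lemma minner_zero_right (S : M3) : minner S 0 = 0 := by simp [minner]

lemma trace_mdev (X : M3) : (mdev X).trace = 0 := by
  simp [mdev, Matrix.trace, Matrix.diag, Fin.sum_univ_three, Matrix.sub_apply,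
    Matrix.smul_apply, Matrix.one_apply]
  ring

lemma trace_mskew (X : M3) : (mskew X).trace = 0 := by
  simp [mskew, Matrix.trace, Matrix.diag, Fin.sum_univ_three]

lemma msym_smul_dev (S : M3) (t : ℝ) :
    msym (t • mdev (msym S)) = t • mdev (msym S) := by
  ext i j
  fin_cases i <;> fin_cases j <;>
    simp [msym, mdev, Matrix.trace, Matrix.diag, Fin.sum_univ_three, Matrix.sub_apply,
      Matrix.add_apply, Matrix.smul_apply, Matrix.one_apply, Matrix.transpose_apply,
      smul_eq_mul] <;> ring

lemma mskew_smul_dev (S : M3) (t : ℝ) :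
    mskew (t • mdev (msym S)) = 0 := by
  ext i j
  fin_cases i <;> fin_cases j <;>
    simp [msym, mskew, mdev, Matrix.trace, Matrix.diag, Fin.sum_univ_three, Matrix.sub_apply,
      Matrix.add_apply, Matrix.smul_apply, Matrix.one_apply, Matrix.transpose_apply,
      smul_eq_mul] <;> ring

lemma msym_smul_skew (S : M3) (t : ℝ) : msym (t • mskew S) = 0 := by
  ext i j
  fin_cases i <;> fin_cases j <;>
    simp [msym, mskew, Matrix.sub_apply, Matrix.add_apply, Matrix.smul_apply,
      Matrix.transpose_apply, smul_eq_mul] <;> ring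

lemma mskew_smul_skew (S : M3) (t : ℝ) : mskew (t • mskew S) = t • mskew S := by
  ext i j
  fin_cases i <;> fin_cases j <;>
    simp [mskew, Matrix.sub_apply, Matrix.smul_apply, Matrix.transpose_apply, smul_eq_mul] <;>
    ring

lemma minner_self_dev (S : M3) :
    minner S (mdev (msym S)) = minner (mdev (msym S)) (mdev (msym S)) := by
  simp [minner_three, mdev, msym, Matrix.trace, Matrix.diag, Fin.sum_univ_three,
    Matrix.sub_apply, Matrix.add_apply, Matrix.smul_apply, Matrix.one_apply,
    Matrix.transpose_apply, smul_eq_mul]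
  ring

lemma minner_self_skew (S : M3) :
    minner S (mskew S) = minner (mskew S) (mskew S) := by
  simp [minner_three, mskew, Fin.sum_univ_three, Matrix.sub_apply, Matrix.smul_apply,
    Matrix.transpose_apply, smul_eq_mul]
  ring

/-- For the dissipation function `Δ₀` with vanishing spin yield stress
(`Δ₀(q, η, β) = σ₀‖sym q‖` if `‖sym q‖ ≤ η` and `‖skew q‖ ≤ β`, `+∞` otherwise),
the supremum of `⟨Σ, q⟩ + g₁ η + g₂ β − Δ₀(q, η, β)` over trace-free `q` and all
`η, β` equals `0` if `g₁ ≤ 0`, `g₂ ≤ 0`, `‖dev sym Σ‖ + g₁ ≤ σ₀` and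
`‖skew Σ‖ + g₂ ≤ 0`; otherwise the supremand is unbounded above. -/
theorem fenchel_conjugate_zero_spin_yield (s0 : ℝ) (hs0 : 0 < s0) (S : M3) (g1 g2 : ℝ) :
    ((g1 ≤ 0 ∧ g2 ≤ 0 ∧ mnorm (mdev (msym S)) + g1 ≤ s0 ∧ mnorm (mskew S) + g2 ≤ 0) →
      IsLUB {x : ℝ | ∃ (q : M3) (η β : ℝ), q.trace = 0 ∧
        mnorm (msym q) ≤ η ∧ mnorm (mskew q) ≤ β ∧
        x = minner S q + g1 * η + g2 * β - s0 * mnorm (msym q)} 0) ∧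
    (¬ (g1 ≤ 0 ∧ g2 ≤ 0 ∧ mnorm (mdev (msym S)) + g1 ≤ s0 ∧ mnorm (mskew S) + g2 ≤ 0) →
      ∀ M : ℝ, ∃ (q : M3) (η β : ℝ), q.trace = 0 ∧
        mnorm (msym q) ≤ η ∧ mnorm (mskew q) ≤ β ∧
        M < minner S q + g1 * η + g2 * β - s0 * mnorm (msym q)) := by
  constructor
  · rintro ⟨hg1, hg2, hD, hW⟩
    have hmem : (0 : ℝ) ∈ {x : ℝ | ∃ (q : M3) (η β : ℝ), q.trace = 0 ∧
        mnorm (msym q) ≤ η ∧ mnorm (mskew q) ≤ β ∧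
        x = minner S q + g1 * η + g2 * β - s0 * mnorm (msym q)} := by
      refine ⟨0, 0, 0, by simp, ?_, ?_, ?_⟩ <;>
        simp [msym_zero, mskew_zero, mnorm_zero, minner_zero_right]
    refine ⟨?_, fun b hb => hb hmem⟩
    rintro x ⟨q, η, β, htr, hη, hβ, rfl⟩
    have ha : 0 ≤ mnorm (msym q) := mnorm_nonneg _
    have hb0 : 0 ≤ mnorm (mskew q) := mnorm_nonneg _
    have hSq : minner S q = minner (mdev (msym S)) (msym q) + minner (mskew S) (mskew q) := by
      rw [minner_decomp, minner_dev_left, trace_msym, trace_msym, htr]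
      ring
    have h1 : minner (mdev (msym S)) (msym q) ≤ mnorm (mdev (msym S)) * mnorm (msym q) :=
      minner_le _ _
    have h2 : minner (mskew S) (mskew q) ≤ mnorm (mskew S) * mnorm (mskew q) :=
      minner_le _ _
    have h3 : (mnorm (mdev (msym S)) + g1 - s0) * mnorm (msym q) ≤ 0 :=
      mul_nonpos_of_nonpos_of_nonneg (by linarith) ha
    have h4 : (mnorm (mskew S) + g2) * mnorm (mskew q) ≤ 0 :=
      mul_nonpos_of_nonpos_of_nonneg (by linarith) hb0
    have h5 : g1 * η ≤ g1 * mnorm (msym q) := mul_le_mul_of_nonpos_left hη hg1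
    have h6 : g2 * β ≤ g2 * mnorm (mskew q) := mul_le_mul_of_nonpos_left hβ hg2
    nlinarith [h1, h2, h3, h4, h5, h6, hSq]
  · intro hno M
    by_cases hg1 : g1 ≤ 0
    · by_cases hg2 : g2 ≤ 0
      · by_cases hD : mnorm (mdev (msym S)) + g1 ≤ s0
        · -- skew case
          have hW : ¬ (mnorm (mskew S) + g2 ≤ 0) := fun h => hno ⟨hg1, hg2, hD, h⟩
          push_neg at hW
          set W := mskew S with hWdef
          have hWpos : 0 < mnorm W := by linarith [mnorm_nonneg W]
          have hc : 0 < mnorm W * (mnorm W + g2) := mul_pos hWpos (by linarith)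
          set c := mnorm W * (mnorm W + g2) with hcdef
          set t := (|M| + 1) / c with htdef
          have ht : 0 ≤ t := div_nonneg (by positivity) hc.le
          refine ⟨t • W, 0, t * mnorm W, ?_, ?_, ?_, ?_⟩
          · rw [Matrix.trace_smul, hWdef, trace_mskew]; simp
          · rw [msym_smul_skew, mnorm_zero]
          · rw [mskew_smul_skew, mnorm_smul t ht]
          · rw [msym_smul_skew, mnorm_zero, minner_smul_right, hWdef, minner_self_skew,
              ← hWdef, ← mnorm_sq]
            have : t * mnorm W ^ 2 + g2 * (t * mnorm W) = t * c := by rw [hcdef]; ring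
            have htc : t * c = |M| + 1 := by
              rw [htdef]; field_simp
            nlinarith [le_abs_self M]
        · -- dev case
          push_neg at hD
          set D := mdev (msym S) with hDdef
          have hDpos : 0 < mnorm D := by linarith [mnorm_nonneg D]
          have hc : 0 < mnorm D * (mnorm D + g1 - s0) := mul_pos hDpos (by linarith)
          set c := mnorm D * (mnorm D + g1 - s0) with hcdef
          set t := (|M| + 1) / c with htdef
          have ht : 0 ≤ t := div_nonneg (by positivity) hc.le
          refine ⟨t • D, t * mnorm D, 0, ?_, ?_, ?_, ?_⟩
          · rw [Matrix.trace_smul, hDdef, trace_mdev]; simp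
          · rw [msym_smul_dev, mnorm_smul t ht]
          · rw [mskew_smul_dev, mnorm_zero]
          · rw [msym_smul_dev, mnorm_smul t ht, minner_smul_right, hDdef, minner_self_dev,
              ← hDdef, ← mnorm_sq]
            have htc : t * c = |M| + 1 := by rw [htdef]; field_simp
            nlinarith [le_abs_self M]
      · -- g2 > 0
        push_neg at hg2
        refine ⟨0, 0, (|M| + 1) / g2, by simp, ?_, ?_, ?_⟩
        · rw [msym_zero, mnorm_zero]
        · rw [mskew_zero, mnorm_zero]; positivity
        · rw [msym_zero, mnorm_zero, minner_zero_right]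
          have : g2 * ((|M| + 1) / g2) = |M| + 1 := by field_simp
          nlinarith [le_abs_self M]
    · -- g1 > 0
      push_neg at hg1
      refine ⟨0, (|M| + 1) / g1, 0, by simp, ?_, ?_, ?_⟩
      · rw [msym_zero, mnorm_zero]; positivity
      · rw [mskew_zero, mnorm_zero]
      · rw [msym_zero, mnorm_zero, minner_zero_right]
        have : g1 * ((|M| + 1) / g1) = |M| + 1 := by field_simp
        nlinarith [le_abs_self M]
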